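/- arXiv:2507.21927 — 5 statements merged into one kernel-verified Lean document; each statement's English description precedes it below -/
import Mathlib

section
/- The element Q = b₀a₀ + c₀d₀ ∈ U(L) acts on the module F_{αβ}(P, ℂ_ε) as the scalar ε, where ℂ_ε is the one-dimensional b-module with e·v = 0 and h·v = εv; and Q acts on F_{αβ}(P,V) by p⊗v ↦ p⊗hv for any b-module V. -/
/- STATEMENT 8: the element `Q = b₀a₀ + c₀d₀ ∈ U(L)` acts on `F_{αβ}(P,V)` by `p ⊗ v ↦ p ⊗ h v` for any `b`-module `V`; in particular on `F_{αβ}(P, ℂ_ε)` (where `e` acts by `0` and `h` by `ε`) it acts as the scalar `ε`. -/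
noncomputable section

open TensorProduct

/-- `x₀^n` for `n ∈ ℤ`, from the operators `x₀` and `x₀^{-1}`. -/
noncomputable def zp {P : Type*} [AddCommGroup P] [Module ℂ P]
    (X Xi : Module.End ℂ P) (n : ℤ) : Module.End ℂ P :=
  if 0 ≤ n then X ^ n.toNat else Xi ^ (-n).toNat

/-- the action of `Q = b₀ a₀ + c₀ d₀` on `F_{αβ}(P,V)`, computed from the
module structure: `b₀, a₀, c₀, d₀` act by the formulas (2.1) of the paper. -/
noncomputable def Qop (β : ℂ) {P V : Type*} [AddCommGroup P] [Module ℂ P]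
    [AddCommGroup V] [Module ℂ V]
    (X0 X0i X1 X1i D0 D1 : Module.End ℂ P) (hV eV : Module.End ℂ V) :
    (P ⊗[ℂ] V) →ₗ[ℂ] (P ⊗[ℂ] V) :=
  -- b₀ ∘ a₀
  (TensorProduct.map (zp X0 X0i 0 * X1i) LinearMap.id) ∘ₗ
      (β • TensorProduct.map (zp X0 X0i 0 * (X1 * (X1 * D1))) LinearMap.id
        + TensorProduct.map (zp X0 X0i 0 * X1) (hV - (0 : ℂ) • eV))
    -- + c₀ ∘ d₀
    + ((-β) • TensorProduct.map (zp X0 X0i 0) LinearMap.id) ∘ₗ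
      (TensorProduct.map (zp X0 X0i 0 * (X1 * D1)) LinearMap.id
        + (0 : ℂ) • TensorProduct.map (zp X0 X0i 0) eV)

theorem Q_acts_by_h
    (α β : ℂ) (hβ : β ≠ 0)
    {P : Type*} [AddCommGroup P] [Module ℂ P]
    (X0 X0i X1 X1i D0 D1 : Module.End ℂ P)
    (h00 : X0 * X0i = 1) (h00' : X0i * X0 = 1)
    (h11 : X1 * X1i = 1) (h11' : X1i * X1 = 1)
    (hD0X0 : D0 * X0 - X0 * D0 = 1) (hD1X1 : D1 * X1 - X1 * D1 = 1)
    (hD0X1 : D0 * X1 = X1 * D0) (hD0X1i : D0 * X1i = X1i * D0)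
    (hD1X0 : D1 * X0 = X0 * D1) (hD1X0i : D1 * X0i = X0i * D1)
    (hD0D1 : D0 * D1 = D1 * D0) (hX0X1 : X0 * X1 = X1 * X0) :
    -- on `F_{αβ}(P,V)`, `Q` acts by `p ⊗ v ↦ p ⊗ h v`
    (∀ {V : Type} [AddCommGroup V] [Module ℂ V] (hV eV : Module.End ℂ V),
      hV * eV - eV * hV = eV →
      ∀ (p : P) (v : V),
        Qop β X0 X0i X1 X1i D0 D1 hV eV (p ⊗ₜ v) = p ⊗ₜ (hV v)) ∧
    -- on `F_{αβ}(P, ℂ_ε)`, `Q` acts as the scalar `ε`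
    (∀ ε : ℂ,
      Qop β X0 X0i X1 X1i D0 D1
          (ε • (LinearMap.id : ℂ →ₗ[ℂ] ℂ)) (0 : Module.End ℂ ℂ)
        = ε • LinearMap.id) := by

  have key : ∀ {V : Type} [AddCommGroup V] [Module ℂ V] (hV eV : Module.End ℂ V)
      (p : P) (v : V),
      Qop β X0 X0i X1 X1i D0 D1 hV eV (p ⊗ₜ v) = p ⊗ₜ (hV v) := by
    intro V _ _ hV eV p v
    have hinv : ∀ x : P, X1i (X1 x) = x := by
      intro x
      have := congrArg (fun f : Module.End ℂ P => f x) h11'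
      simpa [Module.End.mul_apply] using this
    simp only [Qop, zp, if_pos (le_refl (0:ℤ)), Int.toNat_zero, pow_zero, one_mul,
      LinearMap.add_apply, LinearMap.comp_apply, LinearMap.smul_apply,
      TensorProduct.map_tmul, Module.End.mul_apply, LinearMap.id_apply,
      zero_smul, sub_zero, LinearMap.sub_apply, TensorProduct.smul_tmul',
      add_zero, LinearMap.zero_apply, neg_smul, hinv]
    simp only [map_add, TensorProduct.map_tmul, LinearMap.id_apply, Module.End.one_apply,
      LinearMap.map_smul, hinv, TensorProduct.smul_tmul', neg_tmul, neg_smul]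
    abel
  refine ⟨fun hV eV _ p v => key hV eV p v, fun ε => ?_⟩
  apply TensorProduct.ext'
  intro p v
  simpa [← TensorProduct.tmul_smul, smul_eq_mul] using key (ε • (LinearMap.id : ℂ →ₗ[ℂ] ℂ)) 0 p v


end
end

section
/- The U(L)-module F_{αβ}(M_a ⊗ M_{a'}, ℂ_ε) (with P = P₀⊗M_a where M_a is the R₁-module ⊕_{n∈ℤ}ℂx₁^n with ∂₁x₁^n = (a+n)x₁^n, and P₀ simple over R₀) is simple if and only if βa + βn + ε ≠ 0 for all n ∈ ℤ. -/
/- STATEMENT 9: the `U(L)`-module `F_{αβ}(P₀ ⊗ M_a, ℂ_ε)` (with `P₀` a simple `R₀`-module and `M_a = ⊕_{n∈ℤ} ℂ x₁^n`, `∂₁ x₁^{n₁} = (a+n₁) x₁^{n₁}`) is simple iff `βa + βn + ε ≠ 0` for all `n ∈ ℤ`.  The `U(L)`-actions are those listed in the paper. -/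
noncomputable section

open TensorProduct

/-- `M_a = ⊕_{n₁ ∈ ℤ} ℂ x₁^{n₁}`. -/
abbrev Ma : Type := ℤ →₀ ℂ

/-
If `βa + βk + ε = 0`, every `a_n` kills `P₀ ⊗ x₁^k`, so `P₀ ⊗ span {x₁^j | j ≤ k}` is a proper
nonzero submodule.

Conversely, `d₀` acts on the `x₁^k`-component by the scalar `a + k`, and these are pairwise
distinct, so a submodule `N` contains the components of its elements, hence some `p ⊗ x₁^k` with
`p ≠ 0`. When no `βa + βk + ε` vanishes, `a₀` and `b₀` move `p ⊗ x₁^k` to every degree. So the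
`p` with `p ⊗ x₁^k ∈ N` for all `k` form a nonzero subspace of `P₀`, stable under `x₀^{±1}`
(through `b_{±1}`) and under `∂₀` (through `L₀ = x₀ ∂₀`); it is `P₀` by simplicity, and then
`N` is everything.
-/

section FinsuppTensor

variable {R P Q ι : Type*} [CommSemiring R] [AddCommMonoid P] [Module R P]
  [AddCommMonoid Q] [Module R Q]

theorem map_lsum_tmul_single (f : P →ₗ[R] Q) (c : ι → R) (σ : ι → ι) (p : P) (k : ι) :
    map f (Finsupp.lsum R fun i => c i • Finsupp.lsingle (R := R) (M := R) (σ i))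
        (p ⊗ₜ Finsupp.single k (1 : R)) =
      c k • (f p ⊗ₜ Finsupp.single (σ k) (1 : R)) := by
  simp [← tmul_smul]

theorem map_lmapDomain_tmul_single (f : P →ₗ[R] Q) (σ : ι → ι) (p : P) (k : ι) :
    map f (Finsupp.lmapDomain R R σ) (p ⊗ₜ Finsupp.single k (1 : R)) =
      f p ⊗ₜ Finsupp.single (σ k) (1 : R) := by
  rw [map_tmul, Finsupp.lmapDomain_apply, Finsupp.mapDomain_single]

def coeffSubmodule (N : Submodule R (P ⊗[R] (ι →₀ R))) : Submodule R P :=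
  ⨅ k, N.comap ((TensorProduct.mk R P (ι →₀ R)).flip (Finsupp.single k 1))

theorem mem_coeffSubmodule {N : Submodule R (P ⊗[R] (ι →₀ R))} {p : P} :
    p ∈ coeffSubmodule N ↔ ∀ k, p ⊗ₜ Finsupp.single k (1 : R) ∈ N := by
  simp [coeffSubmodule]

variable [DecidableEq ι]

theorem finsuppScalarRight_tmul_single (p : P) (k : ι) :
    finsuppScalarRight R R P ι (p ⊗ₜ Finsupp.single k (1 : R)) = Finsupp.single k p := by
  rw [← finsuppScalarRight_symm_apply_single (S := R), LinearEquiv.apply_symm_apply]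

theorem tmul_single_ne_zero {p : P} (hp : p ≠ 0) (k : ι) :
    p ⊗ₜ[R] Finsupp.single k (1 : R) ≠ 0 := fun h =>
  hp <| by simpa [finsuppScalarRight_tmul_single] using congrArg (finsuppScalarRight R R P ι) h

theorem sum_finsuppScalarRight_tmul_single {z : P ⊗[R] (ι →₀ R)} {s : Finset ι}
    (hs : (finsuppScalarRight R R P ι z).support ⊆ s) :
    ∑ i ∈ s, finsuppScalarRight R R P ι z i ⊗ₜ Finsupp.single i (1 : R) = z := by
  apply (finsuppScalarRight R R P ι).injective
  simp only [map_sum, finsuppScalarRight_tmul_single]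
  rw [← Finsupp.sum_of_support_subset _ hs _ (by simp), Finsupp.sum_single]

def tensorSupported (S : Set ι) : Submodule R (P ⊗[R] (ι →₀ R)) :=
  (Finsupp.supported P R S).comap (finsuppScalarRight R R P ι).toLinearMap

theorem tmul_single_mem_tensorSupported {S : Set ι} (p : P) {k : ι} (hk : k ∈ S) :
    p ⊗ₜ Finsupp.single k (1 : R) ∈ tensorSupported S := by
  rw [tensorSupported, Submodule.mem_comap, LinearEquiv.coe_coe, finsuppScalarRight_tmul_single]
  exact Finsupp.single_mem_supported R p hk

theorem tmul_single_mem_tensorSupported_iff {S : Set ι} {p : P} (hp : p ≠ 0) {k : ι} :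
    p ⊗ₜ Finsupp.single k (1 : R) ∈ tensorSupported S ↔ k ∈ S := by
  rw [tensorSupported, Submodule.mem_comap, LinearEquiv.coe_coe, finsuppScalarRight_tmul_single,
    Finsupp.mem_supported, Finsupp.support_single _ hp, Finset.coe_singleton,
    Set.singleton_subset_iff]

theorem mapsTo_tensorSupported {S : Set ι} (T : P ⊗[R] (ι →₀ R) →ₗ[R] P ⊗[R] (ι →₀ R))
    (hT : ∀ (p : P), ∀ k ∈ S, T (p ⊗ₜ Finsupp.single k (1 : R)) ∈ tensorSupported S)
    {z : P ⊗[R] (ι →₀ R)} (hz : z ∈ tensorSupported S) : T z ∈ tensorSupported S := by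
  rw [← sum_finsuppScalarRight_tmul_single subset_rfl (z := z), map_sum]
  exact Submodule.sum_mem _ fun k hk => hT _ k ((Finsupp.mem_supported R _).1 hz hk)

theorem tensorSupported_ne_bot [Nontrivial P] {S : Set ι} (hS : S.Nonempty) :
    tensorSupported (R := R) (P := P) S ≠ ⊥ := by
  obtain ⟨p, hp⟩ := exists_ne (0 : P)
  obtain ⟨k, hk⟩ := hS
  exact fun h => tmul_single_ne_zero hp k (h ▸ tmul_single_mem_tensorSupported p hk)

theorem tensorSupported_ne_top [Nontrivial P] {S : Set ι} {k : ι} (hk : k ∉ S) :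
    tensorSupported (R := R) (P := P) S ≠ ⊤ := by
  obtain ⟨p, hp⟩ := exists_ne (0 : P)
  exact fun h => hk <| (tmul_single_mem_tensorSupported_iff (R := R) hp).1 (h ▸ Submodule.mem_top)

theorem eq_top_of_coeffSubmodule_eq_top {N : Submodule R (P ⊗[R] (ι →₀ R))}
    (h : coeffSubmodule N = ⊤) : N = ⊤ := by
  refine Submodule.eq_top_iff'.2 fun z => ?_
  rw [← sum_finsuppScalarRight_tmul_single subset_rfl (z := z)]
  exact Submodule.sum_mem _ fun k _ => mem_coeffSubmodule.1 (h ▸ Submodule.mem_top) k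

end FinsuppTensor

section Diagonal

variable {K P ι : Type*} [Field K] [AddCommGroup P] [Module K P] [DecidableEq ι]

theorem finsuppScalarRight_map_diagonal_apply (μ : ι → K) (z : P ⊗[K] (ι →₀ K)) (i : ι) :
    finsuppScalarRight K K P ι
        (map LinearMap.id (Finsupp.lsum K fun k => μ k • Finsupp.lsingle k) z) i =
      μ i • finsuppScalarRight K K P ι z i := by
  induction z using TensorProduct.induction_on with
  | zero => simp
  | tmul p q =>
    simp +contextual [Finsupp.sum_apply, Finsupp.single_apply, mul_smul]
  | add x y hx hy => simp only [map_add, Finsupp.add_apply, hx, hy, smul_add]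

theorem tmul_single_mem_of_diagonal_invariant {N : Submodule K (P ⊗[K] (ι →₀ K))} {μ : ι → K}
    (hμ : Function.Injective μ)
    (hN : ∀ z ∈ N, map LinearMap.id (Finsupp.lsum K fun k => μ k • Finsupp.lsingle k) z ∈ N)
    {z : P ⊗[K] (ι →₀ K)} (hz : z ∈ N) (i : ι) :
    finsuppScalarRight K K P ι z i ⊗ₜ Finsupp.single i (1 : K) ∈ N := by
  set e := finsuppScalarRight K K P ι
  suffices key : ∀ s : Finset ι, ∀ z ∈ N, (e z).support ⊆ s →
      ∀ i, e z i ⊗ₜ Finsupp.single i (1 : K) ∈ N from key _ z hz subset_rfl i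
  intro s
  induction s using Finset.induction_on with
  | empty =>
    intro z _ hs i
    rw [Finsupp.notMem_support_iff.1 fun h => by simpa using hs h, zero_tmul]
    exact N.zero_mem
  | insert j s hj ih =>
    intro z hz hs
    set w := map LinearMap.id (Finsupp.lsum K fun k => μ k • Finsupp.lsingle k) z - μ j • z
    have hw_apply : ∀ i, e w i = (μ i - μ j) • e z i := fun i => by
      simp only [w, e, map_sub, map_smul, Finsupp.sub_apply, Finsupp.smul_apply,
        finsuppScalarRight_map_diagonal_apply, sub_smul]
    have hws : (e w).support ⊆ s := fun i hi => by
      rw [Finsupp.mem_support_iff, hw_apply] at hi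
      have hij : i ≠ j := by rintro rfl; simp at hi
      exact (Finset.mem_insert.1 (hs (Finsupp.mem_support_iff.2 (right_ne_zero_of_smul hi)))).resolve_left
        hij
    have hne : ∀ i ≠ j, e z i ⊗ₜ Finsupp.single i (1 : K) ∈ N := fun i hij => by
      have := ih w (N.sub_mem (hN z hz) (N.smul_mem _ hz)) hws i
      rwa [hw_apply, ← smul_tmul', Submodule.smul_mem_iff _ (sub_ne_zero.2 (hμ.ne hij))] at this
    intro i
    rcases eq_or_ne i j with rfl | hij
    · rw [← sum_finsuppScalarRight_tmul_single hs, Finset.sum_insert hj] at hz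
      exact (N.add_mem_iff_left (N.sum_mem fun k hk => hne k (ne_of_mem_of_not_mem hk hj))).1 hz
    · exact hne i hij

end Diagonal

section ZPow

variable {P : Type*} [AddCommGroup P] [Module ℂ P] (X Xi : Module.End ℂ P)

theorem zp_zero : zp X Xi 0 = 1 := by simp [zp]

theorem zp_one : zp X Xi 1 = X := by simp [zp]

theorem zp_neg_one : zp X Xi (-1) = Xi := by norm_num [zp]

end ZPow

/-- `N` is a `U(L)`-submodule of `F_{αβ}(P₀ ⊗ M_a, ℂ_ε)`, where `Y`, `Yi`, `Dd` act on `P₀` as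
`x₀`, `x₀⁻¹`, `∂₀`. -/
def IsULSubmodule (α β ε a : ℂ) {P₀ : Type*} [AddCommGroup P₀] [Module ℂ P₀]
    (Y Yi Dd : Module.End ℂ P₀) (N : Submodule ℂ (P₀ ⊗[ℂ] Ma)) : Prop :=
  ∀ (n : ℤ), ∀ z ∈ N,
    (TensorProduct.map (zp Y Yi n * (Y * Dd) + ((n : ℂ) * α) • zp Y Yi n)
      LinearMap.id) z ∈ N ∧
    (TensorProduct.map (zp Y Yi n)
      (Finsupp.lsum ℂ fun k : ℤ => (a + (k : ℂ)) • Finsupp.lsingle k)) z ∈ N ∧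
    (TensorProduct.map (zp Y Yi n)
      (Finsupp.lsum ℂ fun k : ℤ =>
        (β * a + β * (k : ℂ) + ε) • Finsupp.lsingle (k + 1))) z ∈ N ∧
    (TensorProduct.map (zp Y Yi n)
      (Finsupp.lmapDomain ℂ ℂ (fun k : ℤ => k - 1))) z ∈ N ∧
    ((-β) • TensorProduct.map (zp Y Yi n) LinearMap.id) z ∈ N

section ULSubmodule

variable {α β ε a : ℂ} {P₀ : Type*} [AddCommGroup P₀] [Module ℂ P₀] {Y Yi Dd : Module.End ℂ P₀}

theorem isULSubmodule_tensorSupported_Iic (α : ℂ) (Y Yi Dd : Module.End ℂ P₀) {n : ℤ}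
    (hn : β * a + β * n + ε = 0) :
    IsULSubmodule α β ε a Y Yi Dd (tensorSupported (Set.Iic n)) := by
  intro m z hz
  refine ⟨?_, ?_, ?_, ?_, ?_⟩ <;> refine mapsTo_tensorSupported _ (fun p k (hk : k ≤ n) => ?_) hz
  · rw [map_tmul, LinearMap.id_apply]
    exact tmul_single_mem_tensorSupported _ hk
  · rw [map_lsum_tmul_single (σ := fun k => k)]
    exact Submodule.smul_mem _ _ (tmul_single_mem_tensorSupported _ hk)
  · rw [map_lsum_tmul_single (σ := fun k => k + 1)]
    rcases hk.lt_or_eq with hlt | rfl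
    · exact Submodule.smul_mem _ _ (tmul_single_mem_tensorSupported _ (Int.add_one_le_of_lt hlt))
    · rw [hn, zero_smul]
      exact Submodule.zero_mem _
  · rw [map_lmapDomain_tmul_single]
    exact tmul_single_mem_tensorSupported _ (Set.mem_Iic.2 (by omega))
  · rw [LinearMap.smul_apply, map_tmul, LinearMap.id_apply]
    exact Submodule.smul_mem _ _ (tmul_single_mem_tensorSupported _ hk)

namespace IsULSubmodule

variable {N : Submodule ℂ (P₀ ⊗[ℂ] Ma)} (hN : IsULSubmodule α β ε a Y Yi Dd N)
include hN

theorem finsuppScalarRight_tmul_single_mem {z : P₀ ⊗[ℂ] Ma} (hz : z ∈ N) (k : ℤ) :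
    finsuppScalarRight ℂ ℂ P₀ ℤ z k ⊗ₜ Finsupp.single k (1 : ℂ) ∈ N :=
  tmul_single_mem_of_diagonal_invariant (μ := fun k : ℤ => a + k)
    (fun i j h => by simpa using h)
    (fun z hz => by simpa only [zp_zero, Module.End.one_eq_id] using (hN 0 z hz).2.1) hz k

theorem tmul_single_add_one_mem {p : P₀} {k : ℤ} (hk : β * a + β * k + ε ≠ 0)
    (h : p ⊗ₜ Finsupp.single k (1 : ℂ) ∈ N) : p ⊗ₜ Finsupp.single (k + 1) (1 : ℂ) ∈ N := by
  have := (hN 0 _ h).2.2.1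
  rwa [map_lsum_tmul_single (σ := fun k => k + 1), zp_zero, Module.End.one_apply,
    Submodule.smul_mem_iff _ hk] at this

theorem zp_tmul_single_sub_one_mem (m : ℤ) {p : P₀} {k : ℤ}
    (h : p ⊗ₜ Finsupp.single k (1 : ℂ) ∈ N) :
    zp Y Yi m p ⊗ₜ Finsupp.single (k - 1) (1 : ℂ) ∈ N := by
  simpa only [map_lmapDomain_tmul_single] using (hN m _ h).2.2.2.1

theorem Y_Dd_tmul_single_mem {p : P₀} {k : ℤ} (h : p ⊗ₜ Finsupp.single k (1 : ℂ) ∈ N) :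
    Y (Dd p) ⊗ₜ Finsupp.single k (1 : ℂ) ∈ N := by
  simpa [zp_zero] using (hN 0 _ h).1

theorem mem_coeffSubmodule_of_tmul_single_mem (hβε : ∀ n : ℤ, β * a + β * n + ε ≠ 0)
    {p : P₀} {k₀ : ℤ} (h : p ⊗ₜ Finsupp.single k₀ (1 : ℂ) ∈ N) : p ∈ coeffSubmodule N :=
  mem_coeffSubmodule.2 fun k => Int.inductionOn' k k₀ h
    (fun k _ hk => hN.tmul_single_add_one_mem (hβε k) hk)
    (fun k _ hk => by simpa [zp_zero] using hN.zp_tmul_single_sub_one_mem 0 hk)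

theorem coeffSubmodule_invariant (hYiY : Yi * Y = 1) :
    ∀ p ∈ coeffSubmodule N, Y p ∈ coeffSubmodule N ∧ Yi p ∈ coeffSubmodule N ∧
      Dd p ∈ coeffSubmodule N := by
  have hshift : ∀ m, ∀ p ∈ coeffSubmodule N, zp Y Yi m p ∈ coeffSubmodule N := fun m p hp =>
    mem_coeffSubmodule.2 fun k => by
      simpa using hN.zp_tmul_single_sub_one_mem m (mem_coeffSubmodule.1 hp (k + 1))
  intro p hp
  refine ⟨by simpa [zp_one] using hshift 1 p hp, by simpa [zp_neg_one] using hshift (-1) p hp, ?_⟩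
  have hYDd : Y (Dd p) ∈ coeffSubmodule N :=
    mem_coeffSubmodule.2 fun k => hN.Y_Dd_tmul_single_mem (mem_coeffSubmodule.1 hp k)
  have hYiYDd : Yi (Y (Dd p)) = Dd p := by
    rw [← Module.End.mul_apply Yi Y, hYiY, Module.End.one_apply]
  simpa only [zp_neg_one, hYiYDd] using hshift (-1) _ hYDd

theorem eq_bot_or_eq_top (hβε : ∀ n : ℤ, β * a + β * n + ε ≠ 0) (hYiY : Yi * Y = 1)
    (hP₀ : ∀ M : Submodule ℂ P₀, (∀ x ∈ M, Y x ∈ M ∧ Yi x ∈ M ∧ Dd x ∈ M) → M = ⊥ ∨ M = ⊤) :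
    N = ⊥ ∨ N = ⊤ := by
  refine or_iff_not_imp_left.2 fun hN₀ => eq_top_of_coeffSubmodule_eq_top ?_
  obtain ⟨z, hz, hz₀⟩ := (Submodule.ne_bot_iff N).1 hN₀
  obtain ⟨k, hk⟩ : ∃ k, finsuppScalarRight ℂ ℂ P₀ ℤ z k ≠ 0 := by
    by_contra! h
    exact hz₀ ((finsuppScalarRight ℂ ℂ P₀ ℤ).map_eq_zero_iff.1 (Finsupp.ext h))
  have hQ₀ : coeffSubmodule N ≠ ⊥ := (Submodule.ne_bot_iff _).2 ⟨_,
    hN.mem_coeffSubmodule_of_tmul_single_mem hβε (hN.finsuppScalarRight_tmul_single_mem hz k), hk⟩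
  exact (hP₀ _ (hN.coeffSubmodule_invariant hYiY)).resolve_left hQ₀

end IsULSubmodule

end ULSubmodule

theorem F_P0Ma_simple_iff_general
    (α β ε a : ℂ)
    -- `P₀`, a simple module over `R₀ = ℂ[x₀^{±1}, ∂_{x₀}]`
    {P₀ : Type*} [AddCommGroup P₀] [Module ℂ P₀] [Nontrivial P₀]
    (Y Yi Dd : Module.End ℂ P₀)
    (hYiY : Yi * Y = 1)
    (hP0simple : ∀ N : Submodule ℂ P₀,
      (∀ x ∈ N, Y x ∈ N ∧ Yi x ∈ N ∧ Dd x ∈ N) → N = ⊥ ∨ N = ⊤) :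
    -- simplicity of `F_{αβ}(P₀ ⊗ M_a, ℂ_ε)` ↔ `βa + βn + ε ≠ 0` for all `n ∈ ℤ`
    ((∀ N : Submodule ℂ (P₀ ⊗[ℂ] Ma),
      (∀ (n : ℤ), ∀ z ∈ N,
        -- L_n : x₀^n ∂₀ p₀ ⊗ x₁^{n₁} + nα x₀^n p₀ ⊗ x₁^{n₁}
        (TensorProduct.map (zp Y Yi n * (Y * Dd) + ((n : ℂ) * α) • zp Y Yi n)
          LinearMap.id) z ∈ N ∧
        -- d_n : x₀^n p₀ ⊗ (a + n₁) x₁^{n₁}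
        (TensorProduct.map (zp Y Yi n)
          (Finsupp.lsum ℂ fun k : ℤ => (a + (k : ℂ)) • Finsupp.lsingle k)) z ∈ N ∧
        -- a_n : x₀^n p₀ ⊗ (βa + βn₁ + ε) x₁^{n₁+1}
        (TensorProduct.map (zp Y Yi n)
          (Finsupp.lsum ℂ fun k : ℤ =>
            (β * a + β * (k : ℂ) + ε) • Finsupp.lsingle (k + 1))) z ∈ N ∧
        -- b_n : x₀^n p₀ ⊗ x₁^{n₁-1}
        (TensorProduct.map (zp Y Yi n)
          (Finsupp.lmapDomain ℂ ℂ (fun k : ℤ => k - 1))) z ∈ N ∧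
        -- c_n : -β x₀^n p₀ ⊗ x₁^{n₁}
        ((-β) • TensorProduct.map (zp Y Yi n) LinearMap.id) z ∈ N) →
      N = ⊥ ∨ N = ⊤)
      ↔ ∀ n : ℤ, β * a + β * (n : ℂ) + ε ≠ 0) := by
  refine ⟨fun hsimple n hn => ?_,
    fun hβε N hN => IsULSubmodule.eq_bot_or_eq_top hN hβε hYiY hP0simple⟩
  rcases hsimple _ (isULSubmodule_tensorSupported_Iic α Y Yi Dd hn) with h | h
  · exact tensorSupported_ne_bot Set.nonempty_Iic h
  · exact tensorSupported_ne_top (by simp : n + 1 ∉ Set.Iic n) h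

theorem F_P0Ma_simple_iff
    (α β ε a : ℂ) (hβ : β ≠ 0)
    -- `P₀`, a simple module over `R₀ = ℂ[x₀^{±1}, ∂_{x₀}]`
    {P₀ : Type*} [AddCommGroup P₀] [Module ℂ P₀] [Nontrivial P₀]
    (Y Yi Dd : Module.End ℂ P₀)
    (hYYi : Y * Yi = 1) (hYiY : Yi * Y = 1) (hDY : Dd * Y - Y * Dd = 1)
    (hP0simple : ∀ N : Submodule ℂ P₀,
      (∀ x ∈ N, Y x ∈ N ∧ Yi x ∈ N ∧ Dd x ∈ N) → N = ⊥ ∨ N = ⊤) :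
    -- simplicity of `F_{αβ}(P₀ ⊗ M_a, ℂ_ε)` ↔ `βa + βn + ε ≠ 0` for all `n ∈ ℤ`
    ((∀ N : Submodule ℂ (P₀ ⊗[ℂ] Ma),
      (∀ (n : ℤ), ∀ z ∈ N,
        -- L_n : x₀^n ∂₀ p₀ ⊗ x₁^{n₁} + nα x₀^n p₀ ⊗ x₁^{n₁}
        (TensorProduct.map (zp Y Yi n * (Y * Dd) + ((n : ℂ) * α) • zp Y Yi n)
          LinearMap.id) z ∈ N ∧
        -- d_n : x₀^n p₀ ⊗ (a + n₁) x₁^{n₁}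
        (TensorProduct.map (zp Y Yi n)
          (Finsupp.lsum ℂ fun k : ℤ => (a + (k : ℂ)) • Finsupp.lsingle k)) z ∈ N ∧
        -- a_n : x₀^n p₀ ⊗ (βa + βn₁ + ε) x₁^{n₁+1}
        (TensorProduct.map (zp Y Yi n)
          (Finsupp.lsum ℂ fun k : ℤ =>
            (β * a + β * (k : ℂ) + ε) • Finsupp.lsingle (k + 1))) z ∈ N ∧
        -- b_n : x₀^n p₀ ⊗ x₁^{n₁-1}
        (TensorProduct.map (zp Y Yi n)
          (Finsupp.lmapDomain ℂ ℂ (fun k : ℤ => k - 1))) z ∈ N ∧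
        -- c_n : -β x₀^n p₀ ⊗ x₁^{n₁}
        ((-β) • TensorProduct.map (zp Y Yi n) LinearMap.id) z ∈ N) →
      N = ⊥ ∨ N = ⊤)
      ↔ ∀ n : ℤ, β * a + β * (n : ℂ) + ε ≠ 0) :=
  F_P0Ma_simple_iff_general α β ε a Y Yi Dd hYiY hP0simple

end
end

section
/- For α, γ ∈ ℂ, β ∈ ℂ*, g(t) ∈ ℂ[t], the map φ_{αβγg}: U(L) → R₀⊗D sending L_n ↦ x₀^n(∂₀+nα)⊗1, d_n ↦ x₀^n⊗(β^{-1}tg(t)+β^{-1}γ+t∂_t), a_n ↦ x₀^n⊗t, b_n ↦ x₀^n⊗(g(t)+β∂_t), c_n ↦ -βx₀^n⊗1, is a surjective homomorphism of associative algebras. -/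
/-!
In `R₀` the Euler operator `∂₀ = x₀ ∂_{x₀}` satisfies `∂₀ x₀ = x₀ (∂₀ + 1)`, hence
`∂₀ x₀ⁿ = x₀ⁿ (∂₀ + n)` for every `n ∈ ℤ`; this yields the Witt relations among the images
`x₀^m (∂₀ + mα) ⊗ 1` of the `L_m` and their action on every `x₀ⁿ ⊗ u`. All other images have the
form `x₀ⁿ ⊗ u`, and powers of `x₀` commute, so their brackets are `x₀^{m+n} ⊗ [u, v]` with `[u, v]`
computed in `D` from `∂_t t = t ∂_t + 1` and `∂_t g(t) = g(t) ∂_t + g'(t)`.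

For surjectivity, `c_{±1}` give `x₀^{±1} ⊗ 1` because `β ≠ 0`, `L₀` gives `∂₀ ⊗ 1` and hence
`∂_{x₀} ⊗ 1 = x₀⁻¹ ∂₀ ⊗ 1`, `a₀` gives `1 ⊗ t`, and then `b₀ - g(a₀)` gives `1 ⊗ ∂_t`; these
elements generate `R₀ ⊗ D`.
-/

noncomputable section

open TensorProduct

/-- the defining relations of `R₀ = ℂ[x₀^{±1}, ∂_{x₀}]`:
generators `0 = x₀`, `1 = x₀⁻¹`, `2 = ∂_{x₀}`. -/
inductive R0Rel : FreeAlgebra ℂ (Fin 3) → FreeAlgebra ℂ (Fin 3) → Prop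
  | inv₁ : R0Rel (FreeAlgebra.ι ℂ 0 * FreeAlgebra.ι ℂ 1) 1
  | inv₂ : R0Rel (FreeAlgebra.ι ℂ 1 * FreeAlgebra.ι ℂ 0) 1
  | der : R0Rel (FreeAlgebra.ι ℂ 2 * FreeAlgebra.ι ℂ 0)
      (FreeAlgebra.ι ℂ 0 * FreeAlgebra.ι ℂ 2 + 1)

/-- `R₀`. -/
abbrev R0 : Type := RingQuot R0Rel

/-- the defining relation of `D = ℂ[t, ∂_t]`: generators `0 = t`, `1 = ∂_t`. -/
inductive DRel : FreeAlgebra ℂ (Fin 2) → FreeAlgebra ℂ (Fin 2) → Prop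
  | der : DRel (FreeAlgebra.ι ℂ 1 * FreeAlgebra.ι ℂ 0)
      (FreeAlgebra.ι ℂ 0 * FreeAlgebra.ι ℂ 1 + 1)

/-- `D`. -/
abbrev DW : Type := RingQuot DRel

noncomputable def x0 : R0 := RingQuot.mkAlgHom ℂ R0Rel (FreeAlgebra.ι ℂ 0)
noncomputable def x0i : R0 := RingQuot.mkAlgHom ℂ R0Rel (FreeAlgebra.ι ℂ 1)
noncomputable def dx0 : R0 := RingQuot.mkAlgHom ℂ R0Rel (FreeAlgebra.ι ℂ 2)
noncomputable def tD : DW := RingQuot.mkAlgHom ℂ DRel (FreeAlgebra.ι ℂ 0)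
noncomputable def dT : DW := RingQuot.mkAlgHom ℂ DRel (FreeAlgebra.ι ℂ 1)

/-- `x₀^n` for `n ∈ ℤ`. -/
noncomputable def x0z (n : ℤ) : R0 := if 0 ≤ n then x0 ^ n.toNat else x0i ^ (-n).toNat

/-- `g(t) ∈ D`. -/
noncomputable def gD (g : Polynomial ℂ) : DW := Polynomial.aeval tD g

/-- image of `L_n`: `x₀^n (∂₀ + nα) ⊗ 1`, where `∂₀ = x₀ ∂_{x₀}`. -/
noncomputable def qL (α : ℂ) (n : ℤ) : R0 ⊗[ℂ] DW :=
  (x0z n * (x0 * dx0) + ((n : ℂ) * α) • x0z n) ⊗ₜ (1 : DW)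

/-- image of `d_n`: `x₀^n ⊗ (β⁻¹ t g(t) + β⁻¹ γ + t ∂_t)`. -/
noncomputable def qD (β γ : ℂ) (g : Polynomial ℂ) (n : ℤ) : R0 ⊗[ℂ] DW :=
  x0z n ⊗ₜ (β⁻¹ • (tD * gD g) + (β⁻¹ * γ) • (1 : DW) + tD * dT)

/-- image of `a_n`: `x₀^n ⊗ t`. -/
noncomputable def qA (n : ℤ) : R0 ⊗[ℂ] DW := x0z n ⊗ₜ tD

/-- image of `b_n`: `x₀^n ⊗ (g(t) + β ∂_t)`. -/
noncomputable def qB (β : ℂ) (g : Polynomial ℂ) (n : ℤ) : R0 ⊗[ℂ] DW :=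
  x0z n ⊗ₜ (gD g + β • dT)

/-- image of `c_n`: `-β x₀^n ⊗ 1`. -/
noncomputable def qC (β : ℂ) (n : ℤ) : R0 ⊗[ℂ] DW := (-β) • (x0z n ⊗ₜ (1 : DW))

/-- commutator. -/
noncomputable def commRD (x y : R0 ⊗[ℂ] DW) : R0 ⊗[ℂ] DW := x * y - y * x


open Polynomial

section LaurentEuler

variable {A : Type*} [Ring A] {u : Aˣ} {d : A}

theorem mul_units_inv_of_mul_eq (h : d * u = u * (d + 1)) :
    d * ↑u⁻¹ = ↑u⁻¹ * (d - 1) := by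
  rw [Units.mul_inv_eq_iff_eq_mul, mul_assoc, sub_mul, one_mul, h, mul_add_one,
    add_sub_cancel_right, Units.inv_mul_cancel_left]

theorem mul_zpow_of_mul_eq (h : d * u = u * (d + 1)) (n : ℤ) :
    d * ↑(u ^ n) = ↑(u ^ n) * (d + n) := by
  induction n using Int.induction_on with
  | zero => simp
  | succ n ih =>
    rw [zpow_add_one, Units.val_mul, ← mul_assoc, ih, mul_assoc, add_mul, h,
      (Int.cast_commute _ _).eq]
    push_cast
    noncomm_ring
  | pred n ih =>
    rw [zpow_sub_one, Units.val_mul, ← mul_assoc, ih, mul_assoc, add_mul,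
      mul_units_inv_of_mul_eq h, (Int.cast_commute _ _).eq]
    push_cast
    noncomm_ring

theorem zpow_mul_zpow_mul (m n : ℤ) (c : A) :
    (↑(u ^ m) : A) * (↑(u ^ n) * c) = ↑(u ^ (m + n)) * c := by
  rw [← mul_assoc, ← Units.val_mul, ← zpow_add]

end LaurentEuler

section Witt

variable {K A : Type*} [CommRing K] [Ring A] [Algebra K A] {u : Aˣ} {d : A}

/-- With `u = x₀` and `d = ∂₀` this is `x₀^m (∂₀ + mα)`, the image of `L_m`. -/
def wittElement (u : Aˣ) (d : A) (α : K) (m : ℤ) : A :=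
  ↑(u ^ m) * d + ((m : K) * α) • ↑(u ^ m)

theorem mul_zpow_mul_of_mul_eq (h : d * u = u * (d + 1)) (n : ℤ) (c : A) :
    d * (↑(u ^ n) * c) = ↑(u ^ n) * (d * c) + (n : K) • (↑(u ^ n) * c) := by
  rw [← mul_assoc, mul_zpow_of_mul_eq h, mul_add, add_mul, Int.cast_smul_eq_zsmul,
    ← zsmul_eq_mul', smul_mul_assoc, mul_assoc]

theorem wittElement_lie_zpow (h : d * u = u * (d + 1)) (α : K) (m n : ℤ) :
    ⁅wittElement u d α m, (↑(u ^ n) : A)⁆ = (n : K) • ↑(u ^ (m + n)) := by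
  have key (k : ℤ) : d * ↑(u ^ k) = ↑(u ^ k) * d + (k : K) • ↑(u ^ k) := by
    simpa using mul_zpow_mul_of_mul_eq h k 1
  simp only [Ring.lie_def, wittElement, add_mul, mul_add, smul_mul_assoc, mul_smul_comm,
    mul_assoc, key, zpow_mul_zpow_mul, ← Units.val_mul, ← zpow_add, add_comm n m]
  module

theorem wittElement_lie_wittElement (h : d * u = u * (d + 1)) (α : K) (m n : ℤ) :
    ⁅wittElement u d α m, wittElement u d α n⁆
      = ((n - m : ℤ) : K) • wittElement u d α (m + n) := by
  have key (k : ℤ) : d * ↑(u ^ k) = ↑(u ^ k) * d + (k : K) • ↑(u ^ k) := by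
    simpa using mul_zpow_mul_of_mul_eq h k 1
  simp only [Ring.lie_def, wittElement, add_mul, mul_add, smul_mul_assoc, mul_smul_comm,
    mul_assoc, key, mul_zpow_mul_of_mul_eq (K := K) h, zpow_mul_zpow_mul, ← Units.val_mul,
    ← zpow_add, add_comm n m]
  push_cast
  module

end Witt

section Weyl

variable {K A : Type*} [CommRing K] [Ring A] [Algebra K A]

/-- `g(t) + β ∂`, the image of `b₀`. -/
def weylB (t d : A) (β : K) (g : K[X]) : A := aeval t g + β • d

theorem aeval_mul_self_mul (t : A) (p : K[X]) (c : A) :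
    aeval t p * (t * c) = t * (aeval t p * c) := by
  rw [← mul_assoc, ← (Algebra.commute_of_mem_adjoin_self (aeval_mem_adjoin_singleton K t)).eq,
    mul_assoc]

theorem aeval_mul_self (t : A) (p : K[X]) : aeval t p * t = t * aeval t p := by
  simpa using aeval_mul_self_mul t p 1

variable {t d : A} (h : d * t = t * d + 1)
include h

theorem mul_mul_of_mul_eq (c : A) : d * (t * c) = t * (d * c) + c := by
  rw [← mul_assoc, h, add_mul, one_mul, mul_assoc]

theorem mul_aeval_of_mul_eq (p : K[X]) :
    d * aeval t p = aeval t p * d + aeval t (derivative p) := by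
  induction p using Polynomial.induction_on with
  | C a => simp [Algebra.commutes]
  | add p q hp hq => simp only [map_add, mul_add, add_mul, hp, hq]; abel
  | monomial n a ih =>
    rw [pow_succ, ← mul_assoc, map_mul, derivative_mul, ← mul_assoc, ih]
    simp only [map_add, map_mul, aeval_X, derivative_X, mul_one, add_mul, mul_assoc, h, mul_add]
    abel

theorem lie_weylB (β : K) (g : K[X]) : ⁅t, weylB t d β g⁆ = (-β) • 1 := by
  simp only [Ring.lie_def, weylB, add_mul, mul_add, smul_mul_assoc, mul_smul_comm, h,
    aeval_mul_self]
  module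

end Weyl

section WeylEuler

variable {K A : Type*} [Field K] [Ring A] [Algebra K A] {t d : A}

/-- `β⁻¹ (t g(t) + γ) + t ∂`, the image of `d₀`. -/
def weylD (t d : A) (β γ : K) (g : K[X]) : A :=
  β⁻¹ • (t * aeval t g) + (β⁻¹ * γ) • 1 + t * d

theorem weylD_lie (h : d * t = t * d + 1) (β γ : K) (g : K[X]) : ⁅weylD t d β γ g, t⁆ = t := by
  simp only [Ring.lie_def, weylD, add_mul, mul_add, smul_mul_assoc, mul_smul_comm, mul_assoc,
    one_mul, mul_one, h, aeval_mul_self]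
  module

theorem weylD_lie_weylB (h : d * t = t * d + 1) {β : K} (hβ : β ≠ 0) (γ : K) (g : K[X]) :
    ⁅weylD t d β γ g, weylB t d β g⁆ = -weylB t d β g := by
  simp only [Ring.lie_def, weylD, weylB, add_mul, mul_add, smul_mul_assoc, mul_smul_comm,
    mul_assoc, one_mul, mul_one, aeval_mul_self_mul, mul_aeval_of_mul_eq h, mul_mul_of_mul_eq h]
  match_scalars <;> field_simp <;> ring

end WeylEuler

section TensorProduct

variable {R A B : Type*} [CommRing R] [Ring A] [Algebra R A] [Ring B] [Algebra R B]

theorem Algebra.TensorProduct.tmul_lie_tmul_of_commute_left {a b : A} (hab : Commute a b)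
    (u v : B) : ⁅a ⊗ₜ[R] u, b ⊗ₜ[R] v⁆ = (a * b) ⊗ₜ ⁅u, v⁆ := by
  simp only [Ring.lie_def, Algebra.TensorProduct.tmul_mul_tmul, hab.eq, TensorProduct.tmul_sub]

theorem Algebra.TensorProduct.tmul_lie_tmul_of_commute_right (a b : A) {u v : B}
    (huv : Commute u v) : ⁅a ⊗ₜ[R] u, b ⊗ₜ[R] v⁆ = ⁅a, b⁆ ⊗ₜ (u * v) := by
  simp only [Ring.lie_def, Algebra.TensorProduct.tmul_mul_tmul, huv.eq, TensorProduct.sub_tmul]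

end TensorProduct

theorem Algebra.TensorProduct.adjoin_includeLeft_image_union_includeRight_image_eq_top
    {R A B : Type*} [CommSemiring R] [Semiring A] [Algebra R A] [Semiring B] [Algebra R B]
    {s : Set A} {t : Set B} (hs : Algebra.adjoin R s = ⊤) (ht : Algebra.adjoin R t = ⊤) :
    Algebra.adjoin R (Algebra.TensorProduct.includeLeft (S := R) '' s ∪
      Algebra.TensorProduct.includeRight (R := R) (A := A) '' t) = ⊤ := by
  rw [_root_.eq_top_iff, ← Algebra.TensorProduct.adjoin_tmul_eq_top, Algebra.adjoin_le_iff]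
  rintro _ ⟨a, b, rfl⟩
  have ha : Algebra.TensorProduct.includeLeft (S := R) a ∈ (Algebra.adjoin R s).map
      (Algebra.TensorProduct.includeLeft (S := R) : A →ₐ[R] A ⊗[R] B) := ⟨a, hs ▸ trivial, rfl⟩
  have hb : Algebra.TensorProduct.includeRight b ∈ (Algebra.adjoin R t).map
      (Algebra.TensorProduct.includeRight : B →ₐ[R] A ⊗[R] B) := ⟨b, ht ▸ trivial, rfl⟩
  rw [AlgHom.map_adjoin] at ha hb
  simpa using Subalgebra.mul_mem _ (Algebra.adjoin_mono Set.subset_union_left ha)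
    (Algebra.adjoin_mono Set.subset_union_right hb)

theorem RingQuot.adjoin_range_mkAlgHom_ι {R X : Type*} [CommSemiring R]
    (r : FreeAlgebra R X → FreeAlgebra R X → Prop) :
    Algebra.adjoin R (Set.range (RingQuot.mkAlgHom R r ∘ FreeAlgebra.ι R)) = ⊤ := by
  rw [Algebra.adjoin_range_eq_range_freeAlgebra_lift, FreeAlgebra.lift_comp_ι,
    AlgHom.range_eq_top]
  exact RingQuot.mkAlgHom_surjective R r

theorem x0_mul_x0i : x0 * x0i = 1 := by
  rw [x0, x0i, ← map_mul, RingQuot.mkAlgHom_rel ℂ R0Rel.inv₁, map_one]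

theorem x0i_mul_x0 : x0i * x0 = 1 := by
  rw [x0, x0i, ← map_mul, RingQuot.mkAlgHom_rel ℂ R0Rel.inv₂, map_one]

theorem dx0_mul_x0 : dx0 * x0 = x0 * dx0 + 1 := by
  rw [x0, dx0, ← map_mul, RingQuot.mkAlgHom_rel ℂ R0Rel.der, map_add, map_mul, map_one]

theorem dT_mul_tD : dT * tD = tD * dT + 1 := by
  rw [tD, dT, ← map_mul, RingQuot.mkAlgHom_rel ℂ DRel.der, map_add, map_mul, map_one]

def x0Unit : R0ˣ := ⟨x0, x0i, x0_mul_x0i, x0i_mul_x0⟩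

theorem x0z_eq_zpow (n : ℤ) : x0z n = ↑(x0Unit ^ n) := by
  rcases le_or_gt 0 n with hn | hn
  · lift n to ℕ using hn
    simp [x0z, x0Unit]
  · obtain ⟨k, rfl⟩ : ∃ k : ℕ, n = -k := ⟨(-n).toNat, by omega⟩
    rw [x0z, if_neg hn.not_ge, neg_neg, Int.toNat_natCast, zpow_neg, zpow_natCast, ← inv_pow,
      Units.val_pow_eq_pow_val]
    rfl

theorem x0z_zero : x0z 0 = 1 := by simp [x0z]

theorem x0z_one : x0z 1 = x0 := by simp [x0z]

theorem x0z_neg_one : x0z (-1) = x0i := by simp [x0z]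

theorem euler_mul_x0Unit : x0 * dx0 * x0Unit = x0Unit * (x0 * dx0 + 1) := by
  rw [x0Unit, Units.val_mk, mul_assoc, dx0_mul_x0]

theorem x0z_lie_x0z_tmul (m n : ℤ) (u v : DW) :
    ⁅x0z m ⊗ₜ[ℂ] u, x0z n ⊗ₜ[ℂ] v⁆ = x0z (m + n) ⊗ₜ ⁅u, v⁆ := by
  rw [x0z_eq_zpow, x0z_eq_zpow, x0z_eq_zpow, Algebra.TensorProduct.tmul_lie_tmul_of_commute_left
    (Commute.zpow_zpow_self x0Unit m n).units_val, ← Units.val_mul, ← zpow_add]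

theorem qL_eq (α : ℂ) (n : ℤ) : qL α n = wittElement x0Unit (x0 * dx0) α n ⊗ₜ 1 := by
  rw [qL, wittElement, x0z_eq_zpow]

theorem qL_lie_x0z_tmul (α : ℂ) (m n : ℤ) (v : DW) :
    ⁅qL α m, x0z n ⊗ₜ[ℂ] v⁆ = (n : ℂ) • (x0z (m + n) ⊗ₜ v) := by
  rw [qL_eq, x0z_eq_zpow, x0z_eq_zpow, Algebra.TensorProduct.tmul_lie_tmul_of_commute_right _ _
    (Commute.one_left v), wittElement_lie_zpow euler_mul_x0Unit, one_mul,
    TensorProduct.smul_tmul']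

theorem qL_lie_qL (α : ℂ) (m n : ℤ) : ⁅qL α m, qL α n⁆ = ((n - m : ℤ) : ℂ) • qL α (m + n) := by
  rw [qL_eq, qL_eq, qL_eq, Algebra.TensorProduct.tmul_lie_tmul_of_commute_right _ _
    (Commute.one_left 1), wittElement_lie_wittElement euler_mul_x0Unit, one_mul,
    TensorProduct.smul_tmul']

theorem qB_eq (β : ℂ) (g : ℂ[X]) (n : ℤ) : qB β g n = x0z n ⊗ₜ weylB tD dT β g := rfl

theorem qD_eq (β γ : ℂ) (g : ℂ[X]) (n : ℤ) : qD β γ g n = x0z n ⊗ₜ weylD tD dT β γ g := rfl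

theorem qC_eq (β : ℂ) (n : ℤ) : qC β n = x0z n ⊗ₜ ((-β) • 1) := by
  rw [qC, TensorProduct.tmul_smul]

theorem commRD_eq_lie (x y : R0 ⊗[ℂ] DW) : commRD x y = ⁅x, y⁆ := (Ring.lie_def x y).symm

theorem adjoin_images_eq_top (α : ℂ) {β : ℂ} (hβ : β ≠ 0) (γ : ℂ) (g : ℂ[X]) :
    Algebra.adjoin ℂ (Set.range (qL α) ∪ Set.range (qD β γ g) ∪ Set.range qA
      ∪ Set.range (qB β g) ∪ Set.range (qC β)) = ⊤ := by
  set S := Algebra.adjoin ℂ (Set.range (qL α) ∪ Set.range (qD β γ g) ∪ Set.range qA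
    ∪ Set.range (qB β g) ∪ Set.range (qC β))
  have hL n : qL α n ∈ S := Algebra.subset_adjoin (by simp)
  have hA n : qA n ∈ S := Algebra.subset_adjoin (by simp)
  have hB n : qB β g n ∈ S := Algebra.subset_adjoin (by simp)
  have hC n : qC β n ∈ S := Algebra.subset_adjoin (by simp)
  have hx n : x0z n ⊗ₜ[ℂ] (1 : DW) ∈ S := by
    simpa [qC, smul_smul, hβ] using S.smul_mem (hC n) (-β)⁻¹
  have hx0 : x0 ⊗ₜ[ℂ] (1 : DW) ∈ S := x0z_one ▸ hx 1
  have hx0i : x0i ⊗ₜ[ℂ] (1 : DW) ∈ S := x0z_neg_one ▸ hx (-1)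
  have ht : (1 : R0) ⊗ₜ[ℂ] tD ∈ S := by simpa [qA, x0z_zero] using hA 0
  have hE : (x0 * dx0) ⊗ₜ[ℂ] (1 : DW) ∈ S := by simpa [qL, x0z_zero] using hL 0
  have hdx0 : dx0 ⊗ₜ[ℂ] (1 : DW) ∈ S := by
    simpa [← mul_assoc, x0i_mul_x0] using S.mul_mem hx0i hE
  have hg : (1 : R0) ⊗ₜ[ℂ] gD g ∈ S := by
    rw [gD, ← Algebra.TensorProduct.includeRight_apply, ← aeval_algHom_apply]
    exact Algebra.adjoin_le (Set.singleton_subset_iff.mpr ht) (aeval_mem_adjoin_singleton ℂ _)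
  have hdT : (1 : R0) ⊗ₜ[ℂ] dT ∈ S := by
    have : (1 : R0) ⊗ₜ[ℂ] dT = β⁻¹ • (qB β g 0 + (-1 : ℂ) • (1 ⊗ₜ gD g)) := by
      rw [qB, x0z_zero, ← TensorProduct.tmul_smul, ← TensorProduct.tmul_add,
        ← TensorProduct.tmul_smul]
      congr 1
      match_scalars <;> simp [hβ]
    rw [this]
    exact S.smul_mem (S.add_mem (hB 0) (S.smul_mem hg _)) _
  rw [eq_top_iff, ← Algebra.TensorProduct.adjoin_includeLeft_image_union_includeRight_image_eq_top
    (RingQuot.adjoin_range_mkAlgHom_ι R0Rel) (RingQuot.adjoin_range_mkAlgHom_ι DRel),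
    Algebra.adjoin_le_iff]
  rintro _ (⟨_, ⟨i, rfl⟩, rfl⟩ | ⟨_, ⟨i, rfl⟩, rfl⟩) <;> fin_cases i
  exacts [hx0, hx0i, hdx0, ht, hdT]

theorem phi_alphabetagammag_hom_surjective
    (α β γ : ℂ) (hβ : β ≠ 0) (g : Polynomial ℂ) :
    (∀ m n : ℤ,
      commRD (qL α m) (qL α n) = ((n - m : ℤ) : ℂ) • qL α (m + n) ∧
      commRD (qL α m) (qA n) = (n : ℂ) • qA (m + n) ∧
      commRD (qL α m) (qB β g n) = (n : ℂ) • qB β g (m + n) ∧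
      commRD (qL α m) (qC β n) = (n : ℂ) • qC β (m + n) ∧
      commRD (qL α m) (qD β γ g n) = (n : ℂ) • qD β γ g (m + n) ∧
      commRD (qA m) (qB β g n) = qC β (m + n) ∧
      commRD (qD β γ g m) (qA n) = qA (m + n) ∧
      commRD (qD β γ g m) (qB β g n) = -qB β g (m + n) ∧
      commRD (qA m) (qA n) = 0 ∧
      commRD (qA m) (qC β n) = 0 ∧
      commRD (qB β g m) (qB β g n) = 0 ∧
      commRD (qB β g m) (qC β n) = 0 ∧
      commRD (qC β m) (qC β n) = 0 ∧
      commRD (qD β γ g m) (qC β n) = 0 ∧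
      commRD (qD β γ g m) (qD β γ g n) = 0) ∧
    Algebra.adjoin ℂ
        (Set.range (qL α) ∪ Set.range (qD β γ g) ∪ Set.range qA
          ∪ Set.range (qB β g) ∪ Set.range (qC β)) = ⊤ := by
  refine ⟨fun m n => ?_, adjoin_images_eq_top α hβ γ g⟩
  have lie_same (x : DW) : ⁅x, x⁆ = 0 := (Commute.refl x).lie_eq
  have lie_scalar (x : DW) (c : ℂ) : ⁅x, c • (1 : DW)⁆ = 0 :=
    ((Commute.one_right x).smul_right c).lie_eq
  simp only [commRD_eq_lie, qL_lie_qL, qA, qB_eq, qC_eq, qD_eq, qL_lie_x0z_tmul, x0z_lie_x0z_tmul,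
    lie_weylB dT_mul_tD, weylD_lie dT_mul_tD, weylD_lie_weylB dT_mul_tD hβ, lie_same, lie_scalar,
    TensorProduct.tmul_zero, TensorProduct.tmul_neg, and_self]

end
end

section
/- The U(L)-module Ω(α,β,γ,λ,g) = ℂ[s,t] with the actions L_n f(s,t)=λ^n(s+nα)f(s-n,t), d_n f = λ^nβ^{-1}(tg(t)+γ)f(s-n,t)+λ^n t∂_t f(s-n,t), a_n f = λ^n t f(s-n,t), b_n f = λ^n g(t)f(s-n,t)+λ^nβ∂_t f(s-n,t), c_n f = -λ^nβ f(s-n,t) is a simple U(L)-module, and it is free of rank 1 as a module over U(ℂL₀⊕ℂa₀). -/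
/- STATEMENT 12: the `U(L)`-module `Ω(α,β,γ,λ,g) = ℂ[s,t]` with the actions below is a simple `U(L)`-module, and it is free of rank 1 as a `U(B)`-module, `B = ℂL₀ ⊕ ℂa₀`: the map `ℂ[u₀,u₁] ≅ U(B) → Ω`, `p ↦ p(L₀, a₀)·1`, is bijective. -/
noncomputable section

open Polynomial

/-- `Ω = ℂ[s,t]`, realized as `(ℂ[s])[t]`: the outer variable is `t`,
the inner variable is `s`. -/
abbrev Om : Type := Polynomial (Polynomial ℂ)

/-- substitution `s ↦ s - n` (leaving `t` fixed). -/
noncomputable def shS (n : ℤ) (f : Om) : Om :=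
  Polynomial.map ((Polynomial.aeval (Polynomial.X - Polynomial.C (n : ℂ))).toRingHom) f

/-- a polynomial `g(t) ∈ ℂ[t]` viewed in `Ω`. -/
noncomputable def tPoly (g : Polynomial ℂ) : Om := g.map (Polynomial.C : ℂ →+* Polynomial ℂ)

/-- action of `L_n`: `f(s,t) ↦ λ^n (s + nα) f(s-n, t)`. -/
noncomputable def wL (α lam : ℂ) (n : ℤ) (f : Om) : Om :=
  (lam ^ n) • (Polynomial.C (Polynomial.X + Polynomial.C ((n : ℂ) * α)) * shS n f)

/-- action of `d_n`: `f ↦ λ^n β⁻¹ (t g(t) + γ) f(s-n,t) + λ^n t ∂_t f(s-n,t)`. -/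
noncomputable def wD (β γ lam : ℂ) (g : Polynomial ℂ) (n : ℤ) (f : Om) : Om :=
  (lam ^ n * β⁻¹) • ((Polynomial.X * tPoly g + Polynomial.C (Polynomial.C γ)) * shS n f)
    + (lam ^ n) • (Polynomial.X * Polynomial.derivative (shS n f))

/-- action of `a_n`: `f ↦ λ^n t f(s-n,t)`. -/
noncomputable def wA (lam : ℂ) (n : ℤ) (f : Om) : Om :=
  (lam ^ n) • (Polynomial.X * shS n f)

/-- action of `b_n`: `f ↦ λ^n g(t) f(s-n,t) + λ^n β ∂_t f(s-n,t)`. -/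
noncomputable def wB (β lam : ℂ) (g : Polynomial ℂ) (n : ℤ) (f : Om) : Om :=
  (lam ^ n) • (tPoly g * shS n f) + (lam ^ n * β) • Polynomial.derivative (shS n f)

/-- action of `c_n`: `f ↦ -λ^n β f(s-n,t)`. -/
noncomputable def wC (β lam : ℂ) (n : ℤ) (f : Om) : Om :=
  (-(lam ^ n) * β) • shS n f

/-! Since `L₀` and `a₀` act by multiplication by `s` and `t`, which generate `ℂ[s,t]`, an invariant
subspace `N` is an ideal. `b₀ - g(t)` acts as `β ∂_t`, so `N` is closed under `∂_t`, and `c₋ₖ` acts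
as a multiple of the shift `s ↦ s + k`. Differentiating a nonzero element of `N` in `t` as often as
its `t`-degree leaves a nonzero `p(s) ∈ N`; its `n`-th forward difference in `s`, `n = deg p`, is a
combination of shifts of `p` and equals the nonzero constant `n! · lc p`, so `1 ∈ N`.
Freeness: `p(L₀, a₀) · 1 = p(s, t)`, so the map `ℂ[u₀,u₁] → Ω` is the standard isomorphism. -/

namespace Polynomial

theorem iterate_derivative_natDegree {R : Type*} [Semiring R] (p : R[X]) :
    derivative^[p.natDegree] p = C (p.natDegree.factorial • p.leadingCoeff) := by
  rw [eq_C_of_natDegree_eq_zero (p := derivative^[p.natDegree] p)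
      (by simpa using natDegree_iterate_derivative p p.natDegree),
    coeff_iterate_derivative, zero_add, Nat.descFactorial_self, leadingCoeff]

theorem exists_C_mem_of_mapsTo_derivative {R : Type*} [Semiring R] [Module.IsTorsionFree ℕ R]
    {s : Set R[X]} (hs : Set.MapsTo derivative s s) {f : R[X]} (hfs : f ∈ s) (hf : f ≠ 0) :
    ∃ c ≠ 0, C c ∈ s := by
  refine ⟨f.natDegree.factorial • f.leadingCoeff,
    smul_ne_zero f.natDegree.factorial_ne_zero (leadingCoeff_ne_zero.2 hf), ?_⟩
  rw [← iterate_derivative_natDegree]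
  exact hs.iterate _ hfs

theorem sum_range_choose_smul_comp_X_add_natCast {R : Type*} [CommRing R] [IsDomain R]
    [Infinite R] (p : R[X]) :
    ∑ k ∈ Finset.range (p.natDegree + 1),
        ((-1 : ℤ) ^ (p.natDegree - k) * p.natDegree.choose k) • p.comp (X + C (k : R)) =
      C (p.leadingCoeff * p.natDegree.factorial) := by
  refine Polynomial.funext fun x => ?_
  have := congrFun p.fwdDiff_iter_degree_eq_factorial x
  rw [fwdDiff_iter_eq_sum_shift] at this
  simpa [eval_finsetSum, add_comm] using this

end Polynomial

theorem Submodule.mul_mem_of_adjoin_eq_top {R A : Type*} [CommSemiring R] [Semiring A]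
    [Algebra R A] {s : Set A} (hs : Algebra.adjoin R s = ⊤) (N : Submodule R A)
    (hN : ∀ x ∈ s, ∀ f ∈ N, x * f ∈ N) (q : A) {f : A} (hf : f ∈ N) : q * f ∈ N := by
  have hq : q ∈ Algebra.adjoin R s := hs ▸ Algebra.mem_top
  induction hq using Algebra.adjoin_induction generalizing f with
  | mem x hx => exact hN x hx f hf
  | algebraMap r => simpa [Algebra.smul_def] using N.smul_mem r hf
  | add x y _ _ hx hy => simpa [add_mul] using N.add_mem (hx hf) (hy hf)
  | mul x y _ _ hx hy => simpa [mul_assoc] using hx (hy hf)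

namespace Polynomial.Bivariate

theorem adjoin_C_X_X {R : Type*} [CommSemiring R] :
    Algebra.adjoin R (Set.range ![C X, X] : Set R[X][X]) = ⊤ := by
  rw [← MvPolynomial.aeval_range, AlgHom.range_eq_top]
  exact (equivMvPolynomial R).symm.surjective

variable {K : Type*} [Field K] (N : Submodule K K[X][X])

theorem eq_top_of_C_C_mem (hmul : ∀ q, ∀ f ∈ N, q * f ∈ N) {c : K} (hc : c ≠ 0)
    (hcN : C (C c) ∈ N) : N = ⊤ := by
  refine eq_top_iff.2 fun x _ => ?_
  have := hmul (x * C (C c⁻¹)) _ hcN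
  rwa [mul_assoc, ← map_mul, ← map_mul, inv_mul_cancel₀ hc, map_one, map_one, mul_one] at this

variable [CharZero K]

theorem exists_C_C_mem_of_comp_mem
    (hshift : ∀ (k : ℕ) (p : K[X]), C p ∈ N → C (p.comp (X + C (k : K))) ∈ N)
    {p : K[X]} (hp : p ≠ 0) (hpN : C p ∈ N) : ∃ c ≠ 0, C (C c) ∈ N := by
  refine ⟨p.leadingCoeff * p.natDegree.factorial,
    mul_ne_zero (leadingCoeff_ne_zero.2 hp) (Nat.cast_ne_zero.2 p.natDegree.factorial_ne_zero), ?_⟩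
  rw [← sum_range_choose_smul_comp_X_add_natCast, map_sum]
  exact N.sum_mem fun k _ => by
    rw [map_zsmul]
    exact zsmul_mem (hshift k p hpN) _

theorem eq_bot_or_eq_top_of_derivative_mem_of_comp_mem (hmul : ∀ q, ∀ f ∈ N, q * f ∈ N)
    (hder : ∀ f ∈ N, derivative f ∈ N)
    (hshift : ∀ (k : ℕ) (p : K[X]), C p ∈ N → C (p.comp (X + C (k : K))) ∈ N) :
    N = ⊥ ∨ N = ⊤ := by
  refine or_iff_not_imp_left.2 fun hN => ?_
  obtain ⟨f, hfN, hf⟩ := N.ne_bot_iff.1 hN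
  obtain ⟨p, hp, hpN⟩ := exists_C_mem_of_mapsTo_derivative hder hfN hf
  obtain ⟨c, hc, hcN⟩ := exists_C_C_mem_of_comp_mem N hshift hp hpN
  exact eq_top_of_C_C_mem N hmul hc hcN

end Polynomial.Bivariate

theorem shS_zero (f : Om) : shS 0 f = f := by
  simp [shS, aeval_X_left]

theorem shS_neg_natCast_C (k : ℕ) (p : ℂ[X]) : shS (-k) (C p) = C (p.comp (X + C (k : ℂ))) := by
  simp [shS, comp_eq_aeval]

theorem wL_zero (α lam : ℂ) (f : Om) : wL α lam 0 f = C X * f := by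
  simp [wL, shS_zero]

theorem wA_zero (lam : ℂ) (f : Om) : wA lam 0 f = X * f := by
  simp [wA, shS_zero]

theorem wB_zero (β lam : ℂ) (g : ℂ[X]) (f : Om) :
    wB β lam g 0 f = tPoly g * f + β • derivative f := by
  simp [wB, shS_zero]

theorem wC_neg_natCast_C (β lam : ℂ) (k : ℕ) (p : ℂ[X]) :
    wC β lam (-k) (C p) = (-(lam ^ (-(k : ℤ))) * β) • C (p.comp (X + C (k : ℂ))) := by
  rw [wC, shS_neg_natCast_C]

theorem iterate_wL_zero_iterate_wA_zero_one (α lam : ℂ) (m n : ℕ) :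
    (wL α lam 0)^[m] ((wA lam 0)^[n] 1) = C X ^ m * X ^ n := by
  simp only [funext (wL_zero α lam), funext (wA_zero lam), mul_left_iterate, mul_one]

theorem sum_coeff_smul_iterate_eq_equivMvPolynomial_symm (α lam : ℂ) (p : MvPolynomial (Fin 2) ℂ) :
    (Finsupp.sum (AddMonoidAlgebra.coeff p) fun mo c =>
      c • ((wL α lam 0)^[mo 0] ((wA lam 0)^[mo 1] (1 : Om)))) =
      (Bivariate.equivMvPolynomial ℂ).symm p := by
  rw [show (Bivariate.equivMvPolynomial ℂ).symm p = MvPolynomial.aeval ![(C X : Om), X] p from rfl,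
    MvPolynomial.aeval_def, MvPolynomial.eval₂_eq', Finsupp.sum]
  simp only [iterate_wL_zero_iterate_wA_zero_one, Fin.prod_univ_two, Algebra.smul_def]
  rfl

theorem Omega_simple_and_UB_free_rank_one
    (α γ β lam : ℂ) (hβ : β ≠ 0) (hlam : lam ≠ 0) (g : Polynomial ℂ) :
    (∀ N : Submodule ℂ Om,
        (∀ (n : ℤ), ∀ f ∈ N, wL α lam n f ∈ N ∧ wD β γ lam g n f ∈ N ∧
          wA lam n f ∈ N ∧ wB β lam g n f ∈ N ∧ wC β lam n f ∈ N) →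
        N = ⊥ ∨ N = ⊤) ∧
    Function.Bijective (fun p : MvPolynomial (Fin 2) ℂ =>
      Finsupp.sum (AddMonoidAlgebra.coeff p) fun mo c => c • ((wL α lam 0)^[mo 0] ((wA lam 0)^[mo 1] (1 : Om)))) := by
  refine ⟨fun N hN => ?_, ?_⟩
  · have hmul : ∀ q, ∀ f ∈ N, q * f ∈ N :=
      Submodule.mul_mem_of_adjoin_eq_top Bivariate.adjoin_C_X_X N <| by
        rintro _ ⟨i, rfl⟩ f hf
        fin_cases i
        · simpa [wL_zero] using (hN 0 f hf).1
        · simpa [wA_zero] using (hN 0 f hf).2.2.1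
    refine Bivariate.eq_bot_or_eq_top_of_derivative_mem_of_comp_mem N hmul (fun f hf => ?_)
      (fun k p hp => ?_)
    · have := N.sub_mem (hN 0 f hf).2.2.2.1 (hmul (tPoly g) f hf)
      rw [wB_zero, add_sub_cancel_left] at this
      exact (N.smul_mem_iff hβ).1 this
    · have := (hN (-k) _ hp).2.2.2.2
      rw [wC_neg_natCast_C] at this
      exact (N.smul_mem_iff (by simp [hlam, hβ])).1 this
  · simp only [sum_coeff_smul_iterate_eq_equivMvPolynomial_symm]
    exact (Bivariate.equivMvPolynomial ℂ).symm.bijective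

end
end

section
/- If deg(g) = n, then Ω(α,β,γ,λ,g) is a free U(H)-module of rank n+1, with basis {1, t, …, t^n}, where H = ℂL₀⊕ℂd₀. -/
/- STATEMENT 13: if `deg g = n`, then `Ω(α,β,γ,λ,g)` is a free `U(H)`-module of rank `n+1` with basis `{1, t, …, t^n}`, where `H = ℂL₀ ⊕ ℂd₀`: the map `U(H)^{n+1} ≅ ℂ[u₀,u₁]^{n+1} → Ω`, `(p_k) ↦ Σ_k p_k(L₀, d₀)·t^k`, is bijective. -/
noncomputable section

open Polynomial

/-!
`L₀` acts on `Ω = ℂ[s][t]` as multiplication by `s`, and `d₀` is `ℂ[s]`-linear, raises the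
`t`-degree by exactly `n + 1` and multiplies the leading coefficient by the nonzero constant
`β⁻¹ lc(g)`. Hence `d₀ʲ tᵏ` (`j ∈ ℕ`, `k ≤ n`) has `t`-degree `j (n + 1) + k` and a unit leading
coefficient; as these degrees run through `ℕ` exactly once, the `d₀ʲ tᵏ` form a triangular
`ℂ[s]`-basis of `ℂ[s][t]`. Multiplying by the monomials `sⁱ = L₀ⁱ 1` gives a `ℂ`-basis indexed by
the pairs `(k, u₀ⁱ u₁ʲ)`, and the map of the theorem sends the standard basis of
`ℂ[u₀, u₁]^{n+1}` onto it.
-/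

namespace Polynomial

variable {R ι : Type*}

theorem natDegree_X_mul_derivative_le [Semiring R] (f : R[X]) :
    (X * derivative f).natDegree ≤ f.natDegree := by
  by_cases hf : f.natDegree = 0
  · simp [derivative_of_natDegree_zero hf]
  · have := natDegree_derivative_le f
    have := natDegree_mul_le (p := (X : R[X])) (q := derivative f)
    have := natDegree_X_le (R := R)
    omega

theorem degree_X_mul_derivative_lt_mul [Semiring R] [NoZeroDivisors R] {P f : R[X]}
    (hP : 0 < P.natDegree) (hf : f ≠ 0) : (X * derivative f).degree < (P * f).degree := by
  refine degree_lt_degree ?_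
  rw [natDegree_mul (ne_zero_of_natDegree_gt hP) hf]
  have := natDegree_X_mul_derivative_le f
  omega

def basisOfNatDegreeEquiv [CommRing R] [IsDomain R] (b : ι → R[X]) (e : ι ≃ ℕ)
    (hdeg : ∀ i, (b i).natDegree = e i) (hunit : ∀ i, IsUnit (b i).leadingCoeff) :
    Module.Basis ι R R[X] :=
  let S : Sequence R :=
    { elems' := fun d => b (e.symm d)
      degree_eq' := fun d => by
        rw [degree_eq_natDegree (leadingCoeff_ne_zero.mp (hunit _).ne_zero), hdeg,
          Equiv.apply_symm_apply] }
  (S.basis fun d => hunit (e.symm d)).reindex e.symm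

@[simp]
theorem basisOfNatDegreeEquiv_apply [CommRing R] [IsDomain R] (b : ι → R[X]) (e : ι ≃ ℕ)
    (hdeg : ∀ i, (b i).natDegree = e i) (hunit : ∀ i, IsUnit (b i).leadingCoeff) (i : ι) :
    basisOfNatDegreeEquiv b e hdeg hunit i = b i := by
  simp [basisOfNatDegreeEquiv]

end Polynomial

theorem Module.Basis.bijective_sum_repr_sum_smul {K N M κ ι : Type*} [CommSemiring K]
    [AddCommMonoid N] [Module K N] [AddCommMonoid M] [Module K M] [Fintype κ]
    (c : Module.Basis ι K N) (b : Module.Basis (κ × ι) K M) :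
    Function.Bijective fun q : κ → N => ∑ k, (c.repr (q k)).sum fun i a => a • b (k, i) := by
  classical
  let Φ : (κ → N) →ₗ[K] M :=
    ∑ k, Finsupp.linearCombination K (fun i => b (k, i)) ∘ₗ c.repr.toLinearMap ∘ₗ LinearMap.proj k
  have hΦ : Φ = (Pi.basis fun _ => c).equiv b (Equiv.sigmaEquivProd κ ι) := by
    refine (Pi.basis fun _ => c).ext fun ⟨k, i⟩ => ?_
    rw [LinearEquiv.coe_coe, Module.Basis.equiv_apply]
    simp [Φ, Pi.single_apply, apply_ite]
  have hΦ_apply : ⇑Φ = fun q : κ → N => ∑ k, (c.repr (q k)).sum fun i a => a • b (k, i) := by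
    ext q
    simp [Φ, Finsupp.linearCombination_apply]
  rw [← hΦ_apply, hΦ]
  exact LinearEquiv.bijective _

theorem iterate_wL_zero (α lam : ℂ) (i : ℕ) (f : Om) :
    (wL α lam 0)^[i] f = C (X ^ i) * f := by
  induction i with
  | zero => simp
  | succ i ih =>
    rw [Function.iterate_succ_apply', ih, pow_succ, C_mul]
    simp [wL, shS_zero, mul_assoc, mul_left_comm]

theorem smul_eq_C_C_mul (c : ℂ) (f : Om) : c • f = C (C c) * f := by
  rw [C_mul', ← Polynomial.algebraMap_eq, algebraMap_smul]

def dZeroFactor (β γ : ℂ) (g : ℂ[X]) : Om :=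
  C (C β⁻¹) * (X * tPoly g + C (C γ))

theorem wD_zero_apply (β γ lam : ℂ) (g : ℂ[X]) (f : Om) :
    wD β γ lam g 0 f = dZeroFactor β γ g * f + X * derivative f := by
  simp only [wD, shS_zero, dZeroFactor, zpow_zero, one_mul, one_smul, smul_eq_C_C_mul, mul_assoc]

section

variable {β : ℂ} (γ lam : ℂ) {g : ℂ[X]}

theorem natDegree_tPoly : (tPoly g).natDegree = g.natDegree :=
  natDegree_map_eq_of_injective C_injective g

theorem leadingCoeff_tPoly : (tPoly g).leadingCoeff = C g.leadingCoeff :=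
  leadingCoeff_map_of_injective C_injective g

theorem tPoly_ne_zero (hg : g ≠ 0) : tPoly g ≠ 0 :=
  (Polynomial.map_ne_zero_iff C_injective).mpr hg

theorem natDegree_dZeroFactor (hβ : β ≠ 0) (hg : g ≠ 0) :
    (dZeroFactor β γ g).natDegree = g.natDegree + 1 := by
  rw [dZeroFactor, natDegree_C_mul (by simpa using hβ), natDegree_add_C,
    natDegree_X_mul (tPoly_ne_zero hg), natDegree_tPoly]

theorem leadingCoeff_dZeroFactor (hg : g ≠ 0) :
    (dZeroFactor β γ g).leadingCoeff = C (β⁻¹ * g.leadingCoeff) := by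
  have hlt : (C (C γ) : Om).degree < (X * tPoly g).degree :=
    degree_lt_degree (by simp [natDegree_X_mul (tPoly_ne_zero hg)])
  rw [dZeroFactor, leadingCoeff_mul, leadingCoeff_add_of_degree_lt' hlt, leadingCoeff_mul,
    leadingCoeff_tPoly]
  simp

theorem natDegree_wD_zero (hβ : β ≠ 0) (hg : g ≠ 0) {f : Om} (hf : f ≠ 0) :
    (wD β γ lam g 0 f).natDegree = g.natDegree + 1 + f.natDegree := by
  have hP : 0 < (dZeroFactor β γ g).natDegree := by rw [natDegree_dZeroFactor γ hβ hg]; omega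
  rw [wD_zero_apply, natDegree_add_eq_left_of_degree_lt (degree_X_mul_derivative_lt_mul hP hf),
    natDegree_mul (ne_zero_of_natDegree_gt hP) hf, natDegree_dZeroFactor γ hβ hg]

theorem leadingCoeff_wD_zero (hβ : β ≠ 0) (hg : g ≠ 0) {f : Om} (hf : f ≠ 0) :
    (wD β γ lam g 0 f).leadingCoeff = C (β⁻¹ * g.leadingCoeff) * f.leadingCoeff := by
  have hP : 0 < (dZeroFactor β γ g).natDegree := by rw [natDegree_dZeroFactor γ hβ hg]; omega
  rw [wD_zero_apply, leadingCoeff_add_of_degree_lt' (degree_X_mul_derivative_lt_mul hP hf),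
    leadingCoeff_mul, leadingCoeff_dZeroFactor γ hg]

theorem leadingCoeff_iterate_wD_zero_X_pow (hβ : β ≠ 0) (hg : g ≠ 0) (j k : ℕ) :
    ((wD β γ lam g 0)^[j] (X ^ k)).leadingCoeff = C ((β⁻¹ * g.leadingCoeff) ^ j) := by
  have hc : β⁻¹ * g.leadingCoeff ≠ 0 := mul_ne_zero (inv_ne_zero hβ) (leadingCoeff_ne_zero.mpr hg)
  induction j with
  | zero => simp
  | succ j ih =>
    have hne : (wD β γ lam g 0)^[j] (X ^ k) ≠ 0 := by
      rw [← leadingCoeff_ne_zero, ih]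
      exact C_ne_zero.mpr (pow_ne_zero _ hc)
    rw [Function.iterate_succ_apply', leadingCoeff_wD_zero γ lam hβ hg hne, ih, ← C_mul, pow_succ']

theorem isUnit_leadingCoeff_iterate_wD_zero_X_pow (hβ : β ≠ 0) (hg : g ≠ 0) (j k : ℕ) :
    IsUnit ((wD β γ lam g 0)^[j] (X ^ k)).leadingCoeff := by
  rw [leadingCoeff_iterate_wD_zero_X_pow γ lam hβ hg, isUnit_C, isUnit_iff_ne_zero]
  exact pow_ne_zero _ (mul_ne_zero (inv_ne_zero hβ) (leadingCoeff_ne_zero.mpr hg))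

theorem natDegree_iterate_wD_zero_X_pow (hβ : β ≠ 0) (hg : g ≠ 0) (j k : ℕ) :
    ((wD β γ lam g 0)^[j] (X ^ k)).natDegree = j * (g.natDegree + 1) + k := by
  induction j with
  | zero => simp
  | succ j ih =>
    have hne : (wD β γ lam g 0)^[j] (X ^ k) ≠ 0 :=
      leadingCoeff_ne_zero.mp (isUnit_leadingCoeff_iterate_wD_zero_X_pow γ lam hβ hg j k).ne_zero
    rw [Function.iterate_succ_apply', natDegree_wD_zero γ lam hβ hg hne, ih]
    ring

def omegaPolyBasis (hβ : β ≠ 0) (hg : g ≠ 0) :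
    Module.Basis (ℕ × Fin (g.natDegree + 1)) ℂ[X] Om :=
  basisOfNatDegreeEquiv (fun jk => (wD β γ lam g 0)^[jk.1] (X ^ (jk.2 : ℕ)))
    (Nat.divModEquiv (g.natDegree + 1)).symm
    (fun jk => natDegree_iterate_wD_zero_X_pow γ lam hβ hg jk.1 jk.2)
    (fun jk => isUnit_leadingCoeff_iterate_wD_zero_X_pow γ lam hβ hg jk.1 jk.2)

theorem omegaPolyBasis_apply (hβ : β ≠ 0) (hg : g ≠ 0) (j : ℕ) (k : Fin (g.natDegree + 1)) :
    omegaPolyBasis γ lam hβ hg (j, k) = (wD β γ lam g 0)^[j] (X ^ (k : ℕ)) :=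
  basisOfNatDegreeEquiv_apply ..

def omegaBasisIndexEquiv (N : ℕ) : Fin N × (Fin 2 →₀ ℕ) ≃ ℕ × (ℕ × Fin N) :=
  (Equiv.prodComm _ _).trans <|
    ((Finsupp.equivFunOnFinite.trans (piFinTwoEquiv fun _ => ℕ)).prodCongr (Equiv.refl _)).trans
      (Equiv.prodAssoc _ _ _)

def omegaBasis (hβ : β ≠ 0) (hg : g ≠ 0) :
    Module.Basis (Fin (g.natDegree + 1) × (Fin 2 →₀ ℕ)) ℂ Om :=
  ((Polynomial.basisMonomials ℂ).smulTower (omegaPolyBasis γ lam hβ hg)).reindex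
    (omegaBasisIndexEquiv _).symm

theorem omegaBasis_apply (α : ℂ) (hβ : β ≠ 0) (hg : g ≠ 0) (k : Fin (g.natDegree + 1))
    (m : Fin 2 →₀ ℕ) :
    omegaBasis γ lam hβ hg (k, m) = (wL α lam 0)^[m 0] ((wD β γ lam g 0)^[m 1] (X ^ (k : ℕ))) := by
  simp [omegaBasis, omegaBasisIndexEquiv, omegaPolyBasis_apply, Module.Basis.smulTower_apply,
    iterate_wL_zero, Polynomial.smul_eq_C_mul, monomial_one_right_eq_X_pow]

end

theorem Omega_UH_free_rank_degree_add_one_general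
    (α γ β lam : ℂ) (hβ : β ≠ 0)
    (g : Polynomial ℂ) (n : ℕ) (hg : g ≠ 0) (hdeg : g.natDegree = n) :
    Function.Bijective (fun q : Fin (n + 1) → MvPolynomial (Fin 2) ℂ =>
      ∑ k : Fin (n + 1), Finsupp.sum (AddMonoidAlgebra.coeff (q k)) fun mo c =>
        c • ((wL α lam 0)^[mo 0] ((wD β γ lam g 0)^[mo 1]
          ((Polynomial.X : Om) ^ (k : ℕ)))) ) := by
  subst hdeg
  have h := (MvPolynomial.basisMonomials (Fin 2) ℂ).bijective_sum_repr_sum_smul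
    (omegaBasis γ lam hβ hg)
  simp only [omegaBasis_apply γ lam α hβ hg] at h
  exact h

theorem Omega_UH_free_rank_degree_add_one
    (α γ β lam : ℂ) (hβ : β ≠ 0) (hlam : lam ≠ 0)
    (g : Polynomial ℂ) (n : ℕ) (hg : g ≠ 0) (hdeg : g.natDegree = n) :
    Function.Bijective (fun q : Fin (n + 1) → MvPolynomial (Fin 2) ℂ =>
      ∑ k : Fin (n + 1), Finsupp.sum (AddMonoidAlgebra.coeff (q k)) fun mo c =>
        c • ((wL α lam 0)^[mo 0] ((wD β γ lam g 0)^[mo 1]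
          ((Polynomial.X : Om) ^ (k : ℕ)))) ) :=
  Omega_UH_free_rank_degree_add_one_general α γ β lam hβ g n hg hdeg

end
end
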